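/- arXiv:1408.6022 — 2 statements merged into one kernel-verified Lean document; each statement's English description precedes it below -/
import Mathlib

section
/- Let A be a complex 2×2 matrix with tr A = 0. Then √|det A| equals the infimum, over all invertible complex 2×2 matrices Ω, of the operator norm ‖Ω·A·Ω⁻¹‖. -/
/-!
Trace zero makes `B * B = -det B • 1` (Cayley–Hamilton), so `|det B| = ‖B * B‖ ≤ ‖B‖²` for every
conjugate `B` of `A`. Conversely, `A` is similar to `!![z, t; 0, -z]` with `z² = -det A`, and
conjugating by `diagonal ![ε, 1]` turns this into `!![z, ε * t; 0, -z]`, whose norm tends to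
`‖!![z, 0; 0, -z]‖ = ‖z‖ = √|det A|` as `ε → 0`.
-/

open MeasureTheory Complex
open scoped ENNReal ComplexOrder

noncomputable section


/-- The Euclidean norm on `ℂ²`. -/
def euclNorm (v : Fin 2 → ℂ) : ℝ :=
  Real.sqrt (‖v 0‖ ^ 2 + ‖v 1‖ ^ 2)

/-- The operator norm of a 2×2 complex matrix acting on Euclidean `ℂ²`. -/
def opNorm2 (A : Matrix (Fin 2) (Fin 2) ℂ) : ℝ :=
  sSup {r : ℝ | ∃ v : Fin 2 → ℂ, euclNorm v ≤ 1 ∧ r = euclNorm (A.mulVec v)}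

open scoped Matrix.Norms.L2Operator
open Matrix Filter Topology

lemma euclNorm_eq_norm_toLp (v : Fin 2 → ℂ) :
    euclNorm v = ‖(WithLp.toLp 2 v : EuclideanSpace ℂ (Fin 2))‖ := by
  simp [euclNorm, EuclideanSpace.norm_eq, Fin.sum_univ_two]

lemma opNorm2_eq_l2_opNorm (A : Matrix (Fin 2) (Fin 2) ℂ) : opNorm2 A = ‖A‖ := by
  rw [opNorm2, ← l2_opNorm_toEuclideanCLM, ← ContinuousLinearMap.sSup_unitClosedBall_eq_norm]
  congr 1
  ext r
  simp only [euclNorm_eq_norm_toLp, Set.mem_ofPred_eq, Set.mem_image, Metric.mem_closedBall,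
    dist_zero_right]
  constructor
  · rintro ⟨v, hv, rfl⟩
    exact ⟨WithLp.toLp 2 v, hv, by rw [toEuclideanCLM_toLp]⟩
  · rintro ⟨x, hx, rfl⟩
    exact ⟨x.ofLp, hx, by rw [← toEuclideanCLM_toLp]⟩

lemma Matrix.mul_self_eq_neg_det_smul_one_of_trace_eq_zero {R : Type*} [CommRing R]
    {B : Matrix (Fin 2) (Fin 2) R} (hB : B.trace = 0) :
    B * B = -B.det • (1 : Matrix (Fin 2) (Fin 2) R) := by
  have h11 : B 1 1 = -B 0 0 := by rw [trace_fin_two] at hB; linear_combination hB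
  ext i j
  fin_cases i <;> fin_cases j <;> simp [mul_apply, det_fin_two, h11] <;> ring

lemma Matrix.l2_opNorm_diag_self_neg {𝕜 : Type*} [RCLike 𝕜] (z : 𝕜) :
    ‖!![z, 0; 0, -z]‖ = ‖z‖ := by
  rw [show !![z, 0; 0, -z] = diagonal ![z, -z] from (diagonal_fin_two ![z, -z]).symm,
    l2_opNorm_diagonal]
  simp [Pi.norm_def, Fin.univ_succ]

lemma Matrix.norm_det_le_l2_opNorm_sq_of_trace_eq_zero {𝕜 : Type*} [RCLike 𝕜]
    {B : Matrix (Fin 2) (Fin 2) 𝕜} (hB : B.trace = 0) : ‖B.det‖ ≤ ‖B‖ ^ 2 :=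
  calc ‖B.det‖ = ‖B * B‖ := by
        rw [mul_self_eq_neg_det_smul_one_of_trace_eq_zero hB, norm_smul, norm_neg, norm_one,
          mul_one]
    _ ≤ ‖B‖ ^ 2 := (norm_mul_le B B).trans_eq (sq ‖B‖).symm

lemma Matrix.exists_conj_eq_upperTriangular_of_trace_eq_zero {K : Type*} [Field K] [IsAlgClosed K]
    {A : Matrix (Fin 2) (Fin 2) K} (hA : A.trace = 0) :
    ∃ Ω : Matrix (Fin 2) (Fin 2) K, IsUnit Ω ∧ ∃ z t, Ω * A * Ω⁻¹ = !![z, t; 0, -z] := by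
  have h11 : A 1 1 = -A 0 0 := by rw [trace_fin_two] at hA; linear_combination hA
  by_cases h10 : A 1 0 = 0
  · refine ⟨1, isUnit_one, A 0 0, A 0 1, ?_⟩
    rw [inv_one, Matrix.one_mul, Matrix.mul_one, ← h10, ← h11]
    exact eta_fin_two A
  obtain ⟨z, hz⟩ := IsAlgClosed.exists_pow_nat_eq (A 0 0 ^ 2 + A 0 1 * A 1 0) two_pos
  set P := !![z + A 0 0, 1; A 1 0, 0]
  have hP : IsUnit P.det := by simpa [P, det_fin_two_of] using h10
  have hAP : A * P = P * !![z, 1; 0, -z] := by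
    ext i j
    fin_cases i <;> fin_cases j <;> simp [P, mul_apply, h11] <;>
      first | ring1 | linear_combination -hz
  refine ⟨P⁻¹, (isUnit_iff_isUnit_det _).2 (isUnit_nonsing_inv_det P hP), z, 1, ?_⟩
  rw [nonsing_inv_nonsing_inv P hP, Matrix.mul_assoc, hAP, ← Matrix.mul_assoc,
    nonsing_inv_mul P hP, Matrix.one_mul]

lemma Matrix.diagonal_mul_upperTriangular_mul_inv {K : Type*} [Field K] {ε : K} (hε : ε ≠ 0)
    (x y t : K) :
    diagonal ![ε, 1] * !![x, t; 0, y] * (diagonal ![ε, 1])⁻¹ = !![x, ε * t; 0, y] := by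
  have hinv : (diagonal ![ε, 1])⁻¹ = diagonal ![ε⁻¹, 1] := by
    refine inv_eq_right_inv ?_
    rw [diagonal_mul_diagonal, ← diagonal_one]
    congr 1
    ext i
    fin_cases i <;> simp [hε]
  rw [hinv]
  ext i j
  fin_cases i <;> fin_cases j <;> simp [hε, mul_comm ε x]

theorem stmt7 (A : Matrix (Fin 2) (Fin 2) ℂ) (h : A.trace = 0) :
    Real.sqrt ‖A.det‖
      = sInf {r : ℝ | ∃ Ω : Matrix (Fin 2) (Fin 2) ℂ, IsUnit Ω ∧ r = opNorm2 (Ω * A * Ω⁻¹)} := by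
  obtain ⟨Ω, hΩ, z, t, hT⟩ := exists_conj_eq_upperTriangular_of_trace_eq_zero h
  have hdet : Real.sqrt ‖A.det‖ = ‖z‖ := by
    rw [← det_conj hΩ, hT, det_fin_two_of, mul_zero, sub_zero, mul_neg, norm_neg, norm_mul,
      Real.sqrt_mul_self (norm_nonneg z)]
  simp_rw [opNorm2_eq_l2_opNorm]
  set S := {r : ℝ | ∃ Ω : Matrix (Fin 2) (Fin 2) ℂ, IsUnit Ω ∧ r = ‖Ω * A * Ω⁻¹‖}
  have lower : ∀ r ∈ S, Real.sqrt ‖A.det‖ ≤ r := by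
    rintro r ⟨Ω', hΩ', rfl⟩
    rw [← det_conj hΩ', Real.sqrt_le_left (norm_nonneg _)]
    exact norm_det_le_l2_opNorm_sq_of_trace_eq_zero (by rw [trace_conj hΩ', h])
  have mem : ∀ ε : ℂ, ε ≠ 0 → ‖!![z, ε * t; 0, -z]‖ ∈ S := by
    intro ε hε
    have hD : IsUnit (diagonal ![ε, 1]) := by
      rw [isUnit_diagonal, Pi.isUnit_iff]; simp [Fin.forall_fin_two, hε]
    refine ⟨diagonal ![ε, 1] * Ω, hD.mul hΩ, ?_⟩
    rw [Matrix.mul_inv_rev, ← diagonal_mul_upperTriangular_mul_inv hε, ← hT]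
    simp only [Matrix.mul_assoc]
  have hlim : Tendsto (fun ε : ℂ => ‖!![z, ε * t; 0, -z]‖) (𝓝[≠] 0) (𝓝 ‖z‖) := by
    have hcont : Continuous (fun ε : ℂ => ‖!![z, ε * t; 0, -z]‖) := by fun_prop
    simpa [l2_opNorm_diag_self_neg] using (hcont.tendsto 0).mono_left nhdsWithin_le_nhds
  refine le_antisymm (le_csInf ⟨_, 1, isUnit_one, rfl⟩ lower) ?_
  rw [hdet]
  exact ge_of_tendsto hlim
    (eventually_nhdsWithin_of_forall fun ε hε => csInf_le ⟨_, lower⟩ (mem ε hε))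

end
end

section
/- Let B be a complex 2×2 matrix with det B = 1 such that (1/i)·(Bᴴ·J·B − J) is positive semidefinite (B is J-contractive). If B₂₁ ≠ 0 then Im(B₂₂/B₂₁) ≥ 0, and if B₁₁ ≠ 0 then Im(B₁₂/B₁₁) ≥ 0. -/
/-!
With `Q v = Im (conj v₁ · v₀)`, one has `vᴴ J v = 2i Q(v)`, so the hypothesis says exactly that
`Q v ≤ Q (B v)` for every `v`. Feeding in the columns `(B₁₁, -B₁₀)` and `(-B₀₁, B₀₀)` of the adjugate,
which `B` maps to multiples of a basis vector (where `Q` vanishes), gives `Im (conj B₁₀ · B₁₁) ≥ 0` and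
`Im (conj B₀₀ · B₀₁) ≥ 0`; these have the signs of `Im (B₁₁ / B₁₀)` and `Im (B₀₁ / B₀₀)`.
-/

open MeasureTheory Complex
open scoped ENNReal ComplexOrder

noncomputable section


/-- The matrix `J = [[0,-1],[1,0]]` over `ℂ`. -/
def Jc : Matrix (Fin 2) (Fin 2) ℂ := !![0, -1; 1, 0]

open Matrix

lemma star_dotProduct_Jc_mulVec (v : Fin 2 → ℂ) :
    star v ⬝ᵥ (Jc *ᵥ v) = 2 * I * (star (v 1) * v 0).im := by
  simp only [Jc, dotProduct, mulVec, Fin.sum_univ_two, Pi.star_apply, of_apply, cons_val',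
    cons_val_fin_one, cons_val_zero, cons_val_one]
  apply Complex.ext <;> simp <;> ring

lemma im_star_mul_le_of_posSemidef {B : Matrix (Fin 2) (Fin 2) ℂ}
    (hJ : (I⁻¹ • (Bᴴ * Jc * B - Jc)).PosSemidef) (v : Fin 2 → ℂ) :
    (star (v 1) * v 0).im ≤ (star ((B *ᵥ v) 1) * (B *ᵥ v) 0).im := by
  have h := hJ.dotProduct_mulVec_nonneg v
  rw [smul_mulVec, sub_mulVec, ← mulVec_mulVec, ← mulVec_mulVec, dotProduct_smul, dotProduct_sub,
    dotProduct_mulVec, ← star_mulVec, star_dotProduct_Jc_mulVec, star_dotProduct_Jc_mulVec] at h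
  have hscale (x y : ℝ) : I⁻¹ • (2 * I * x - 2 * I * y) = ((2 * (x - y) : ℝ) : ℂ) := by
    rw [smul_eq_mul]
    field_simp
    push_cast
    ring
  rw [hscale, zero_le_real] at h
  linarith

lemma im_star_mul_nonpos_of_mulVec_eq_zero {B : Matrix (Fin 2) (Fin 2) ℂ}
    (hJ : (I⁻¹ • (Bᴴ * Jc * B - Jc)).PosSemidef) (v : Fin 2 → ℂ)
    (hv : (B *ᵥ v) 0 = 0 ∨ (B *ᵥ v) 1 = 0) :
    (star (v 1) * v 0).im ≤ 0 := by
  have h := im_star_mul_le_of_posSemidef hJ v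
  rcases hv with hv | hv <;> simpa [hv] using h

lemma im_div_nonneg_of_im_star_mul_nonneg {z w : ℂ} (h : 0 ≤ (star w * z).im) :
    0 ≤ (z / w).im := by
  rw [Complex.div_im, ← sub_div]
  apply div_nonneg _ (Complex.normSq_nonneg w)
  simpa [mul_comm] using h

theorem stmt15_general (B : Matrix (Fin 2) (Fin 2) ℂ)
    (hJ : (Complex.I⁻¹ • (B.conjTranspose * Jc * B - Jc)).PosSemidef) :
    (B 1 0 ≠ 0 → 0 ≤ (B 1 1 / B 1 0).im) ∧ (B 0 0 ≠ 0 → 0 ≤ (B 0 1 / B 0 0).im) := by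
  refine ⟨fun _ => im_div_nonneg_of_im_star_mul_nonneg ?_,
    fun _ => im_div_nonneg_of_im_star_mul_nonneg ?_⟩
  · have h := im_star_mul_nonpos_of_mulVec_eq_zero hJ ![B 1 1, -B 1 0]
      (Or.inr (by simp [mulVec, dotProduct, Fin.sum_univ_two, mul_comm]))
    simpa using h
  · have h := im_star_mul_nonpos_of_mulVec_eq_zero hJ ![-B 0 1, B 0 0]
      (Or.inl (by simp [mulVec, dotProduct, Fin.sum_univ_two, mul_comm]))
    simpa using h

theorem stmt15 (B : Matrix (Fin 2) (Fin 2) ℂ) (hdet : B.det = 1)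
    (hJ : (Complex.I⁻¹ • (B.conjTranspose * Jc * B - Jc)).PosSemidef) :
    (B 1 0 ≠ 0 → 0 ≤ (B 1 1 / B 1 0).im) ∧ (B 0 0 ≠ 0 → 0 ≤ (B 0 1 / B 0 0).im) :=
  stmt15_general B hJ

end
end
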